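/- Let h : [-1,1] → ℝ be C¹ with h(y) ≤ 0 for all y ∈ [-1,1] and h(-1) = h(1) = 0. Fix x₀ > 0 and let γ = (x,y) be the maximal orbit of F₁ in Θ with γ(0) = (x₀, 0). Then γ is defined on all of ℝ, y(s) is strictly increasing on ℝ, x attains its strict global minimum x₀ at s = 0, and x(s) → ∞, y(s) → ±1 as s → ±∞. -/

import Mathlib

open Filter Set

/-- The vector field `F_ε` of the phase plane system: `F_ε(x,y) =
(y, (1-y²)/tanh x − 2ε·h(y)·√(1-y²))`. -/
noncomputable def F (h : ℝ → ℝ) (ε : ℝ) (p : ℝ × ℝ) : ℝ × ℝ :=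
  (p.2, (1 - p.2 ^ 2) / Real.tanh p.1 - 2 * ε * h p.2 * Real.sqrt (1 - p.2 ^ 2))

/-- The phase plane `Θ = (0,∞) × (-1,1)`. -/
def PhasePlane : Set (ℝ × ℝ) := Set.Ioi (0 : ℝ) ×ˢ Set.Ioo (-1 : ℝ) 1

/-- `γ` is an orbit of `F_ε` on the open interval `I`: it takes values in `Θ` and solves
`γ' = F_ε ∘ γ` on `I`. -/
def IsOrbitOn (h : ℝ → ℝ) (ε : ℝ) (γ : ℝ → ℝ × ℝ) (I : Set ℝ) : Prop :=
  IsOpen I ∧ I.OrdConnected ∧ ∀ s ∈ I, γ s ∈ PhasePlane ∧ HasDerivAt γ (F h ε (γ s)) s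

/-- A maximal orbit: an orbit admitting no extension to a solution on a strictly
larger interval. -/
def IsMaxOrbitOn (h : ℝ → ℝ) (ε : ℝ) (γ : ℝ → ℝ × ℝ) (I : Set ℝ) : Prop :=
  IsOrbitOn h ε γ I ∧
    ∀ (δ : ℝ → ℝ × ℝ) (J : Set ℝ), IsOrbitOn h ε δ J → I ⊆ J → Set.EqOn δ γ I → J = I

/-- The open interval of reals with (possibly infinite) extended-real endpoints. -/
def EIoo (a b : EReal) : Set ℝ := {s : ℝ | a < (s : EReal) ∧ (s : EReal) < b}

/-- The inverse hyperbolic tangent. -/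
noncomputable def arctanh (x : ℝ) : ℝ := Real.log ((1 + x) / (1 - x)) / 2

/-!
Since `h ≤ 0`, the second component of `F₁` is at least `1 - y² > 0`, so `y` increases along
every orbit. Suppose the orbit through `(x₀, 0)` stopped at a finite time `B`. On `[0, B)` we have
`y ≥ 0`, so `x` increases, and `x' = y < 1` bounds it; as `h` is Lipschitz with `h(1) = 0`,
`y' ≤ C (1 - y)`, and Gronwall keeps `y` away from `1`. Hence `γ` converges to a point of `Θ` as
`s → B⁻`, and local existence continues it past `B`, contradicting maximality. The time reversal
`s ↦ (x(-s), -y(-s))` is an orbit for `y ↦ h(-y)`, which handles negative times.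
On the whole line, `y' ≥ 1 - y²` forces `y → ±1` at `±∞`, hence `|x'| → 1` and `x → ∞` at both
ends, while `x' = y` vanishes only at `s = 0`, where `x` has its strict minimum.
-/

open Topology

theorem Real.tanh_pos {x : ℝ} (hx : 0 < x) : 0 < Real.tanh x := by
  rw [Real.tanh_eq_sinh_div_cosh]
  exact div_pos (Real.sinh_pos_iff.2 hx) (Real.cosh_pos x)

theorem Real.tanh_monotone : Monotone Real.tanh := fun x y hxy => by
  have hmem : ∀ z, Real.tanh z ∈ Ioo (-1 : ℝ) 1 :=
    fun z => ⟨Real.neg_one_lt_tanh z, Real.tanh_lt_one z⟩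
  rwa [← Real.artanh_le_artanh_iff (hmem x) (hmem y), Real.artanh_tanh, Real.artanh_tanh]

theorem Real.contDiff_tanh {n : WithTop ℕ∞} : ContDiff ℝ n Real.tanh := by
  simp_rw [funext Real.tanh_eq_sinh_div_cosh]
  exact Real.contDiff_sinh.div Real.contDiff_cosh fun x => (Real.cosh_pos x).ne'

theorem HasDerivAt.fst {E G : Type*} [NormedAddCommGroup E] [NormedSpace ℝ E]
    [NormedAddCommGroup G] [NormedSpace ℝ G] {f : ℝ → E × G} {f' : E × G} {x : ℝ}
    (hf : HasDerivAt f f' x) : HasDerivAt (fun t => (f t).1) f'.1 x :=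
  (ContinuousLinearMap.fst ℝ E G).hasFDerivAt.comp_hasDerivAt x hf

theorem HasDerivAt.snd {E G : Type*} [NormedAddCommGroup E] [NormedSpace ℝ E]
    [NormedAddCommGroup G] [NormedSpace ℝ G] {f : ℝ → E × G} {f' : E × G} {x : ℝ}
    (hf : HasDerivAt f f' x) : HasDerivAt (fun t => (f t).2) f'.2 x :=
  (ContinuousLinearMap.snd ℝ E G).hasFDerivAt.comp_hasDerivAt x hf

theorem monotoneOn_of_hasDerivAt_nonneg {D : Set ℝ} (hD : Convex ℝ D) {f f' : ℝ → ℝ}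
    (hf : ∀ x ∈ D, HasDerivAt f (f' x) x) (hf' : ∀ x ∈ interior D, 0 ≤ f' x) :
    MonotoneOn f D :=
  monotoneOn_of_hasDerivWithinAt_nonneg hD (fun x hx => (hf x hx).continuousAt.continuousWithinAt)
    (fun x hx => (hf x (interior_subset hx)).hasDerivWithinAt) hf'

theorem strictMonoOn_of_hasDerivAt_pos {D : Set ℝ} (hD : Convex ℝ D) {f f' : ℝ → ℝ}
    (hf : ∀ x ∈ D, HasDerivAt f (f' x) x) (hf' : ∀ x ∈ interior D, 0 < f' x) :
    StrictMonoOn f D :=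
  strictMonoOn_of_hasDerivWithinAt_pos hD (fun x hx => (hf x hx).continuousAt.continuousWithinAt)
    (fun x hx => (hf x (interior_subset hx)).hasDerivWithinAt) hf'

theorem mul_exp_le_of_hasDerivAt {w w' : ℝ → ℝ} {C c B : ℝ}
    (hw : ∀ t ∈ Ico c B, HasDerivAt w (w' t) t) (hw' : ∀ t ∈ Ico c B, -(C * w t) ≤ w' t)
    {t : ℝ} (ht : t ∈ Ico c B) : w c * Real.exp (-(C * (t - c))) ≤ w t := by
  have hmono : MonotoneOn (fun s => w s * Real.exp (C * s)) (Ico c B) := by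
    refine monotoneOn_of_hasDerivAt_nonneg (convex_Ico c B)
      (fun s hs => (hw s hs).mul ((hasDerivAt_id s).const_mul C).exp) fun s hs => ?_
    have hw's := hw' s (interior_subset hs)
    have := Real.exp_pos (C * s)
    simp only [id, mul_one]
    nlinarith
  have key := hmono (left_mem_Ico.2 (ht.1.trans_lt ht.2)) ht ht.1
  have hexp : Real.exp (-(C * (t - c))) = Real.exp (C * c) / Real.exp (C * t) := by
    rw [← Real.exp_sub]; ring_nf
  rw [hexp, mul_div_assoc', div_le_iff₀ (Real.exp_pos _)]
  exact key

theorem tendsto_atTop_of_hasDerivAt_ge {f f' : ℝ → ℝ} {c : ℝ} (hc : 0 < c)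
    (hf : ∀ s, HasDerivAt f (f' s) s) (hf' : ∀ᶠ s in atTop, c ≤ f' s) :
    Tendsto f atTop atTop := by
  obtain ⟨s₀, hs₀⟩ := eventually_atTop.1 hf'
  have hmono : MonotoneOn (fun s => f s - c * s) (Ici s₀) :=
    monotoneOn_of_hasDerivAt_nonneg (convex_Ici s₀)
      (fun s _ => (hf s).sub ((hasDerivAt_id s).const_mul c)) fun s hs => by
        rw [interior_Ici] at hs
        linarith [hs₀ s hs.le]
  refine tendsto_atTop_mono' atTop (eventually_atTop.2 ⟨s₀, fun s hs => ?_⟩)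
    (tendsto_atTop_add_const_left _ (f s₀ - c * s₀) (tendsto_id.const_mul_atTop hc))
  have := hmono self_mem_Ici hs hs
  simp only [id] at this ⊢
  linarith

theorem lt_of_hasDerivAt_of_strictMono {x y : ℝ → ℝ} (hx : ∀ s, HasDerivAt x (y s) s)
    (hy : StrictMono y) {s₀ s : ℝ} (hy₀ : y s₀ = 0) (hs : s ≠ s₀) : x s₀ < x s := by
  rcases hs.lt_or_gt with hlt | hgt
  · obtain ⟨ξ, hξ, hslope⟩ := exists_hasDerivAt_eq_slope x y hlt
      (fun t _ => (hx t).continuousAt.continuousWithinAt) fun t _ => hx t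
    have : y ξ < 0 := hy₀ ▸ hy hξ.2
    rw [hslope, div_neg_iff] at this
    rcases this with h | h <;> linarith [h.1, h.2]
  · obtain ⟨ξ, hξ, hslope⟩ := exists_hasDerivAt_eq_slope x y hgt
      (fun t _ => (hx t).continuousAt.continuousWithinAt) fun t _ => hx t
    have : 0 < y ξ := hy₀ ▸ hy hξ.1
    rw [hslope, div_pos_iff] at this
    rcases this with h | h <;> linarith [h.1, h.2]

theorem MonotoneOn.exists_tendsto_nhdsLT_mem_Icc {f : ℝ → ℝ} {c B lo hi : ℝ} (hcB : c < B)
    (hf : MonotoneOn f (Ico c B)) (hbd : ∀ t ∈ Ico c B, f t ∈ Icc lo hi) :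
    ∃ L ∈ Icc lo hi, Tendsto f (𝓝[<] B) (𝓝 L) := by
  have hlim := (hf.mono Ioo_subset_Ico_self).tendsto_nhdsWithin_Ioo_left (nonempty_Ioo.2 hcB)
    ⟨hi, by rintro _ ⟨t, ht, rfl⟩; exact (hbd t (Ioo_subset_Ico_self ht)).2⟩
  refine ⟨_, isClosed_Icc.mem_of_tendsto hlim ?_, hlim⟩
  filter_upwards [Ioo_mem_nhdsLT hcB] with t ht using hbd t (Ioo_subset_Ico_self ht)

theorem neg_mem_Icc_neg_one_one {y : ℝ} (hy : y ∈ Icc (-1 : ℝ) 1) : -y ∈ Icc (-1 : ℝ) 1 :=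
  ⟨by linarith [hy.2], by linarith [hy.1]⟩

theorem isOpen_phasePlane : IsOpen PhasePlane := isOpen_Ioi.prod isOpen_Ioo

theorem isOpen_EIoo (a b : EReal) : IsOpen (EIoo a b) :=
  isOpen_Ioo.preimage continuous_coe_real_ereal

theorem ordConnected_EIoo (a b : EReal) : (EIoo a b).OrdConnected :=
  ordConnected_Ioo.preimage_mono fun _ _ h => EReal.coe_le_coe_iff.2 h

theorem contDiffAt_F {h : ℝ → ℝ} (ε : ℝ) (hC : ContDiffOn ℝ 1 h (Icc (-1 : ℝ) 1))
    {p : ℝ × ℝ} (hp : p ∈ PhasePlane) : ContDiffAt ℝ 1 (F h ε) p := by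
  obtain ⟨hx, hy⟩ := hp
  have hy2 : 1 - p.2 ^ 2 ≠ 0 := by nlinarith [hy.1, hy.2]
  have hh : ContDiffAt ℝ 1 (fun q : ℝ × ℝ => h q.2) p :=
    (hC.contDiffAt (Icc_mem_nhds hy.1 hy.2)).comp p contDiffAt_snd
  have hsq : ContDiffAt ℝ 1 (fun q : ℝ × ℝ => 1 - q.2 ^ 2) p := by fun_prop
  refine contDiffAt_snd.prodMk ((hsq.div ?_ (Real.tanh_pos hx).ne').sub
    ((contDiffAt_const.mul hh).mul ((Real.contDiffAt_sqrt hy2).comp p hsq)))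
  exact Real.contDiff_tanh.contDiffAt.comp p contDiffAt_fst

theorem one_sub_sq_le_F_snd {h : ℝ → ℝ} (hle : ∀ y ∈ Icc (-1 : ℝ) 1, h y ≤ 0)
    {p : ℝ × ℝ} (hp : p ∈ PhasePlane) : 1 - p.2 ^ 2 ≤ (F h 1 p).2 := by
  obtain ⟨hx, hy⟩ := hp
  have hy2 : 0 ≤ 1 - p.2 ^ 2 := by nlinarith [hy.1, hy.2]
  have hcoth : 1 - p.2 ^ 2 ≤ (1 - p.2 ^ 2) / Real.tanh p.1 :=
    (le_div_iff₀ (Real.tanh_pos hx)).2 (mul_le_of_le_one_right hy2 (Real.tanh_lt_one _).le)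
  have hh : 0 ≤ -h p.2 * Real.sqrt (1 - p.2 ^ 2) :=
    mul_nonneg (neg_nonneg.2 (hle _ ⟨hy.1.le, hy.2.le⟩)) (Real.sqrt_nonneg _)
  simp only [F]
  linarith

theorem F_snd_le {h : ℝ → ℝ} {K : NNReal} (hK : LipschitzOnWith K h (Icc (-1 : ℝ) 1))
    (hp1 : h 1 = 0) {m : ℝ} (hm : 0 < m) {p : ℝ × ℝ} (hx : m ≤ p.1) (hy : p.2 ∈ Ico 0 1) :
    (F h 1 p).2 ≤ (2 / Real.tanh m + 2 * K) * (1 - p.2) := by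
  obtain ⟨hy0, hy1⟩ := hy
  have hh : |h p.2| ≤ K * (1 - p.2) := by
    have := hK.dist_le_mul p.2 ⟨by linarith, hy1.le⟩ 1 ⟨by norm_num, le_rfl⟩
    rwa [hp1, Real.dist_0_eq_abs, Real.dist_eq, abs_sub_comm, abs_of_pos (sub_pos.2 hy1)] at this
  have hsqrt : Real.sqrt (1 - p.2 ^ 2) ≤ 1 := Real.sqrt_le_one.2 (by nlinarith)
  have hcoth : (1 - p.2 ^ 2) / Real.tanh p.1 ≤ 2 * (1 - p.2) / Real.tanh m :=
    div_le_div₀ (by nlinarith) (by nlinarith) (Real.tanh_pos hm) (Real.tanh_monotone hx)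
  have hterm : -(2 * 1 * h p.2 * Real.sqrt (1 - p.2 ^ 2)) ≤ 2 * K * (1 - p.2) := by
    have h1 := mul_le_mul_of_nonneg_right (neg_le_abs (h p.2)) (Real.sqrt_nonneg (1 - p.2 ^ 2))
    have h2 := mul_le_of_le_one_right (abs_nonneg (h p.2)) hsqrt
    linarith
  calc (F h 1 p).2 ≤ 2 * (1 - p.2) / Real.tanh m + 2 * K * (1 - p.2) := by
        simp only [F]; linarith
    _ = (2 / Real.tanh m + 2 * K) * (1 - p.2) := by ring

theorem exists_extension_hasDerivAt_right {E : Type*} [NormedAddCommGroup E] [NormedSpace ℝ E]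
    [CompleteSpace E] {f : E → E} {γ : ℝ → E} {a B : ℝ} {p : E} (haB : a < B)
    (hf : ContDiffAt ℝ 1 f p) (hγ : ∀ t ∈ Ioo a B, HasDerivAt γ (f (γ t)) t)
    (hlim : Tendsto γ (𝓝[<] B) (𝓝 p)) :
    ∃ δ : ℝ → E, EqOn δ γ (Iio B) ∧ δ B = p ∧ ∀ᶠ t in 𝓝 B, HasDerivAt δ (f (δ t)) t := by
  obtain ⟨α, hαB, r, hr, hα⟩ := hf.exists_forall_mem_closedBall_exists_eq_forall_mem_Ioo_hasDerivAt₀ B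
  set δ : ℝ → E := fun t => if t < B then γ t else α t
  have hδγ : EqOn δ γ (Iio B) := fun t ht => if_pos ht
  have hδα : EqOn δ α (Ici B) := fun t ht => if_neg (not_lt.2 ht)
  have hleft : ∀ t ∈ Ioo a B, HasDerivAt δ (f (δ t)) t := fun t ht => by
    rw [hδγ ht.2]
    exact (hγ t ht).congr_of_eventuallyEq (eventually_of_mem (Iio_mem_nhds ht.2) hδγ)
  have hB : HasDerivAt δ (f p) B := by
    have hIic : HasDerivWithinAt δ (f p) (Iic B) B := by
      refine hasDerivWithinAt_Iic_of_tendsto_deriv (s := Ioo a B)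
        (fun t ht => (hleft t ht).differentiableAt.differentiableWithinAt) ?_
        (Ioo_mem_nhdsLT haB) ?_
      · rw [ContinuousWithinAt, hδα self_mem_Ici, hαB]
        exact (hlim.mono_left (nhdsWithin_mono _ Ioo_subset_Iio_self)).congr'
          (eventually_nhdsWithin_of_forall fun t ht => (hδγ ht.2).symm)
      · refine (hf.continuousAt.tendsto.comp hlim).congr' ?_
        filter_upwards [Ioo_mem_nhdsLT haB] with t ht
        rw [(hleft t ht).deriv, hδγ ht.2]
        rfl
    have hIci : HasDerivWithinAt δ (f p) (Ici B) B := by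
      have := (hα B ⟨by linarith, by linarith⟩).hasDerivWithinAt (s := Ici B)
      rw [hαB] at this
      exact this.congr hδα (hδα self_mem_Ici)
    simpa [Iic_union_Ici, hasDerivWithinAt_univ] using hIic.union hIci
  refine ⟨δ, hδγ, by rw [hδα self_mem_Ici, hαB], ?_⟩
  filter_upwards [Ioo_mem_nhds (max_lt haB (show B - r < B by linarith))
    (show B < B + r by linarith)] with t ht
  rcases lt_trichotomy t B with hlt | rfl | hgt
  · exact hleft t ⟨(le_max_left _ _).trans_lt ht.1, hlt⟩
  · rwa [hδα self_mem_Ici, hαB]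
  · rw [hδα hgt.le]
    exact (hα t ⟨(le_max_right _ _).trans_lt ht.1, ht.2⟩).congr_of_eventuallyEq
      (eventually_of_mem (Ioi_mem_nhds hgt) fun s hs => hδα (mem_Ici.2 (le_of_lt hs)))

theorem IsMaxOrbitOn.not_tendsto_nhdsLT {h : ℝ → ℝ} {ε : ℝ} {γ : ℝ → ℝ × ℝ} {a : EReal}
    {B : ℝ} {p : ℝ × ℝ} (horb : IsMaxOrbitOn h ε γ (EIoo a B)) (haB : a < B)
    (hp : p ∈ PhasePlane) (hF : ContDiffAt ℝ 1 (F h ε) p) : ¬ Tendsto γ (𝓝[<] B) (𝓝 p) := by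
  intro hlim
  obtain ⟨⟨-, -, hγ⟩, hmax⟩ := horb
  obtain ⟨a', haa', ha'B⟩ := EReal.lt_iff_exists_real_btwn.1 haB
  have hIoo : Ioo a' B ⊆ EIoo a B := fun t ht =>
    ⟨haa'.trans (EReal.coe_lt_coe_iff.2 ht.1), EReal.coe_lt_coe_iff.2 ht.2⟩
  obtain ⟨δ, hδγ, hδB, hδ⟩ := exists_extension_hasDerivAt_right (EReal.coe_lt_coe_iff.1 ha'B) hF
    (fun t ht => (hγ t (hIoo ht)).2) hlim
  have hnhds : ∀ᶠ t in 𝓝 B, δ t ∈ PhasePlane ∧ HasDerivAt δ (F h ε (δ t)) t := by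
    refine (hδ.self_of_nhds.continuousAt.eventually_mem ?_).and hδ
    exact isOpen_phasePlane.mem_nhds (hδB ▸ hp)
  obtain ⟨u, hBu, hu⟩ := exists_Ico_subset_of_mem_nhds hnhds ⟨B + 1, by linarith⟩
  have hJ : IsOrbitOn h ε δ (EIoo a u) := by
    refine ⟨isOpen_EIoo _ _, ordConnected_EIoo _ _, fun t ht => ?_⟩
    rcases lt_or_ge t B with htB | hBt
    · have htI : t ∈ EIoo a B := ⟨ht.1, EReal.coe_lt_coe_iff.2 htB⟩
      rw [hδγ htB]
      refine ⟨(hγ t htI).1, (hγ t htI).2.congr_of_eventuallyEq ?_⟩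
      exact eventually_of_mem (Iio_mem_nhds htB) hδγ
    · exact hu ⟨hBt, EReal.coe_lt_coe_iff.1 ht.2⟩
  have hBJ : B ∈ EIoo a u := ⟨haB, EReal.coe_lt_coe_iff.2 hBu⟩
  have := hmax δ _ hJ (fun t ht => ⟨ht.1, ht.2.trans (EReal.coe_lt_coe_iff.2 hBu)⟩)
    (fun t ht => hδγ (EReal.coe_lt_coe_iff.1 ht.2))
  exact lt_irrefl (B : EReal) (this ▸ hBJ).2

namespace IsOrbitOn

variable {h : ℝ → ℝ} {ε : ℝ} {γ : ℝ → ℝ × ℝ} {I : Set ℝ}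

theorem hasDerivAt_fst (horb : IsOrbitOn h ε γ I) {s : ℝ} (hs : s ∈ I) :
    HasDerivAt (fun t => (γ t).1) (γ s).2 s :=
  (horb.2.2 s hs).2.fst

theorem hasDerivAt_snd (horb : IsOrbitOn h ε γ I) {s : ℝ} (hs : s ∈ I) :
    HasDerivAt (fun t => (γ t).2) (F h ε (γ s)).2 s :=
  (horb.2.2 s hs).2.snd

theorem strictMonoOn_snd (hle : ∀ y ∈ Icc (-1 : ℝ) 1, h y ≤ 0) (horb : IsOrbitOn h 1 γ I) :
    StrictMonoOn (fun s => (γ s).2) I :=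
  strictMonoOn_of_hasDerivAt_pos (convex_iff_ordConnected.2 horb.2.1)
    (fun _ hs => horb.hasDerivAt_snd hs) fun s hs => by
      have hγs := (horb.2.2 s (interior_subset hs)).1
      have hy := hγs.2
      nlinarith [one_sub_sq_le_F_snd hle hγs, hy.1, hy.2]

theorem fst_sub_fst_le (horb : IsOrbitOn h ε γ I) {s t : ℝ} (hs : s ∈ I) (ht : t ∈ I)
    (hst : s ≤ t) : (γ t).1 - (γ s).1 ≤ t - s := by
  have hmono : MonotoneOn (fun r => r - (γ r).1) I :=
    monotoneOn_of_hasDerivAt_nonneg (convex_iff_ordConnected.2 horb.2.1)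
      (fun r hr => (hasDerivAt_id r).sub (horb.hasDerivAt_fst hr)) fun r hr => by
        linarith [(horb.2.2 r (interior_subset hr)).1.2.2]
  linarith [hmono hs ht hst]

theorem monotoneOn_fst (horb : IsOrbitOn h ε γ I) {D : Set ℝ} (hD : Convex ℝ D) (hDI : D ⊆ I)
    (hy : ∀ s ∈ D, 0 ≤ (γ s).2) : MonotoneOn (fun s => (γ s).1) D :=
  monotoneOn_of_hasDerivAt_nonneg hD (fun _ hs => horb.hasDerivAt_fst (hDI hs))
    fun s hs => hy s (interior_subset hs)

end IsOrbitOn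

theorem IsOrbitOn.snd_le_of_lipschitzOnWith {h : ℝ → ℝ} {K : NNReal}
    (hK : LipschitzOnWith K h (Icc (-1 : ℝ) 1)) (hp1 : h 1 = 0) {γ : ℝ → ℝ × ℝ} {I : Set ℝ}
    (horb : IsOrbitOn h 1 γ I) {t₀ B : ℝ} (hsub : Ico t₀ B ⊆ I)
    (hx : ∀ t ∈ Ico t₀ B, (γ t₀).1 ≤ (γ t).1) (hy : ∀ t ∈ Ico t₀ B, 0 ≤ (γ t).2)
    {t : ℝ} (ht : t ∈ Ico t₀ B) :
    (γ t).2 ≤ 1 - (1 - (γ t₀).2) * Real.exp (-((2 / Real.tanh (γ t₀).1 + 2 * K) * (B - t₀))) := by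
  have ht₀ : t₀ ∈ Ico t₀ B := left_mem_Ico.2 (ht.1.trans_lt ht.2)
  have hγ₀ := (horb.2.2 t₀ (hsub ht₀)).1
  set C := 2 / Real.tanh (γ t₀).1 + 2 * K
  have hC : 0 ≤ C := by have := Real.tanh_pos hγ₀.1; positivity
  have hgap := mul_exp_le_of_hasDerivAt (C := C) (fun s hs => (horb.hasDerivAt_snd (hsub hs)).const_sub 1)
    (fun s hs => by
      linarith [F_snd_le hK hp1 hγ₀.1 (hx s hs) ⟨hy s hs, (horb.2.2 s (hsub hs)).1.2.2⟩]) ht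
  have hexp : Real.exp (-(C * (B - t₀))) ≤ Real.exp (-(C * (t - t₀))) :=
    Real.exp_le_exp.2 (neg_le_neg (mul_le_mul_of_nonneg_left (by linarith [ht.2]) hC))
  nlinarith [hγ₀.2.2]

theorem IsMaxOrbitOn.eq_top_of_snd_nonneg {h : ℝ → ℝ} (hC : ContDiffOn ℝ 1 h (Icc (-1 : ℝ) 1))
    (hle : ∀ y ∈ Icc (-1 : ℝ) 1, h y ≤ 0) (hp1 : h 1 = 0) {γ : ℝ → ℝ × ℝ} {a b : EReal}
    (horb : IsMaxOrbitOn h 1 γ (EIoo a b)) {t₀ : ℝ} (ht₀ : t₀ ∈ EIoo a b)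
    (hy₀ : 0 ≤ (γ t₀).2) : b = ⊤ := by
  induction b using EReal.rec with
  | bot => exact absurd ht₀.2 not_lt_bot
  | top => rfl
  | coe B =>
  exfalso
  have hB : t₀ < B := EReal.coe_lt_coe_iff.1 ht₀.2
  have hsub : Ico t₀ B ⊆ EIoo a B := fun t ht =>
    ⟨ht₀.1.trans_le (EReal.coe_le_coe_iff.2 ht.1), EReal.coe_lt_coe_iff.2 ht.2⟩
  have hγ := horb.1
  have hγ₀ := (hγ.2.2 t₀ ht₀).1
  have hymono := (hγ.strictMonoOn_snd hle).monotoneOn.mono hsub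
  have hy : ∀ t ∈ Ico t₀ B, 0 ≤ (γ t).2 := fun t ht =>
    hy₀.trans (hymono (left_mem_Ico.2 hB) ht ht.1)
  have hxmono := hγ.monotoneOn_fst (convex_Ico t₀ B) hsub hy
  have hx : ∀ t ∈ Ico t₀ B, (γ t₀).1 ≤ (γ t).1 := fun t ht =>
    hxmono (left_mem_Ico.2 hB) ht ht.1
  obtain ⟨K, hK⟩ := hC.exists_lipschitzOnWith one_ne_zero (convex_Icc _ _) isCompact_Icc
  obtain ⟨Lx, hLx, hx_lim⟩ := hxmono.exists_tendsto_nhdsLT_mem_Icc hB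
    (hi := (γ t₀).1 + (B - t₀)) fun t ht =>
    ⟨hx t ht, by linarith [hγ.fst_sub_fst_le (hsub (left_mem_Ico.2 hB)) (hsub ht) ht.1, ht.2]⟩
  obtain ⟨Ly, hLy, hy_lim⟩ := hymono.exists_tendsto_nhdsLT_mem_Icc hB fun t ht =>
    ⟨hy t ht, hγ.snd_le_of_lipschitzOnWith hK hp1 hsub hx hy ht⟩
  have hp : (Lx, Ly) ∈ PhasePlane := by
    refine ⟨hγ₀.1.trans_le hLx.1, by linarith [hLy.1], hLy.2.trans_lt ?_⟩
    have := Real.exp_pos (-((2 / Real.tanh (γ t₀).1 + 2 * K) * (B - t₀)))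
    nlinarith [hγ₀.2.2]
  exact horb.not_tendsto_nhdsLT (ht₀.1.trans ht₀.2) hp (contDiffAt_F 1 hC hp)
    (hx_lim.prodMk_nhds hy_lim)

theorem EIoo_bot_top : EIoo ⊥ ⊤ = univ :=
  eq_univ_of_forall fun s => ⟨EReal.bot_lt_coe s, EReal.coe_lt_top s⟩

theorem neg_preimage_EIoo (a b : EReal) : Neg.neg ⁻¹' EIoo a b = EIoo (-b) (-a) := by
  ext s
  simp only [EIoo, mem_preimage, mem_ofPred_eq, EReal.coe_neg]
  rw [EReal.lt_neg_comm, EReal.neg_lt_comm, and_comm]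

def reflectOrbit (γ : ℝ → ℝ × ℝ) : ℝ → ℝ × ℝ := fun s => ((γ (-s)).1, -(γ (-s)).2)

theorem IsOrbitOn.reflect {h : ℝ → ℝ} {ε : ℝ} {γ : ℝ → ℝ × ℝ} {I : Set ℝ}
    (horb : IsOrbitOn h ε γ I) :
    IsOrbitOn (fun y => h (-y)) ε (reflectOrbit γ) (Neg.neg ⁻¹' I) := by
  obtain ⟨hI, hIc, hγ⟩ := horb
  refine ⟨hI.preimage continuous_neg, ⟨fun s hs t ht r hr => ?_⟩, fun s hs => ?_⟩
  · exact hIc.out ht hs ⟨neg_le_neg hr.2, neg_le_neg hr.1⟩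
  obtain ⟨⟨hx, hy⟩, hder⟩ := hγ (-s) hs
  refine ⟨⟨hx, by dsimp [reflectOrbit]; linarith [hy.2], by dsimp [reflectOrbit]; linarith [hy.1]⟩,
    ?_⟩
  have hrev : HasDerivAt (fun t => γ (-t)) ((-1 : ℝ) • F h ε (γ (-s))) s :=
    hder.scomp s (hasDerivAt_neg s)
  exact (hrev.fst.prodMk hrev.snd.neg).congr_deriv (by simp [F, reflectOrbit])

theorem IsMaxOrbitOn.reflect {h : ℝ → ℝ} {ε : ℝ} {γ : ℝ → ℝ × ℝ} {I : Set ℝ}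
    (horb : IsMaxOrbitOn h ε γ I) :
    IsMaxOrbitOn (fun y => h (-y)) ε (reflectOrbit γ) (Neg.neg ⁻¹' I) := by
  refine ⟨horb.1.reflect, fun δ J hJ hIJ hδ => ?_⟩
  have hJ' : IsOrbitOn h ε (reflectOrbit δ) (Neg.neg ⁻¹' J) := by
    simpa only [neg_neg] using hJ.reflect
  have := horb.2 (reflectOrbit δ) _ hJ' (fun s hs => hIJ (by simpa using hs)) fun s hs => by
    simp [reflectOrbit, hδ (show -s ∈ Neg.neg ⁻¹' I by simpa using hs)]
  ext s
  simp [← this]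

theorem IsMaxOrbitOn.eq_bot_of_snd_nonpos {h : ℝ → ℝ} (hC : ContDiffOn ℝ 1 h (Icc (-1 : ℝ) 1))
    (hle : ∀ y ∈ Icc (-1 : ℝ) 1, h y ≤ 0) (hm1 : h (-1) = 0) {γ : ℝ → ℝ × ℝ} {a b : EReal}
    (horb : IsMaxOrbitOn h 1 γ (EIoo a b)) {t₀ : ℝ} (ht₀ : t₀ ∈ EIoo a b)
    (hy₀ : (γ t₀).2 ≤ 0) : a = ⊥ := by
  have hrefl := horb.reflect
  rw [neg_preimage_EIoo] at hrefl
  refine EReal.neg_eq_top_iff.1 (hrefl.eq_top_of_snd_nonneg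
    (hC.comp contDiff_neg.contDiffOn fun _ => neg_mem_Icc_neg_one_one)
    (fun y hy => hle (-y) (neg_mem_Icc_neg_one_one hy)) hm1 (t₀ := -t₀) ?_ ?_)
  · rw [← neg_preimage_EIoo]
    simpa using ht₀
  · simpa [reflectOrbit] using hy₀

namespace IsOrbitOn

variable {h : ℝ → ℝ} {γ : ℝ → ℝ × ℝ}

theorem tendsto_snd_atTop (hle : ∀ y ∈ Icc (-1 : ℝ) 1, h y ≤ 0)
    (horb : IsOrbitOn h 1 γ univ) : Tendsto (fun s => (γ s).2) atTop (𝓝 1) := by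
  have hmem : ∀ s, γ s ∈ PhasePlane := fun s => (horb.2.2 s (mem_univ s)).1
  have hbdd : BddAbove (range fun s => (γ s).2) := ⟨1, by rintro _ ⟨s, rfl⟩; exact (hmem s).2.2.le⟩
  have hlim := tendsto_atTop_ciSup (strictMonoOn_univ.1 (horb.strictMonoOn_snd hle)).monotone hbdd
  set L := ⨆ s, (γ s).2
  obtain hL | hL := (ciSup_le fun s => (hmem s).2.2.le : L ≤ 1).lt_or_eq
  · have hL' : -1 < L := (hmem 0).2.1.trans_le (le_ciSup hbdd 0)
    have hF : ∀ᶠ s in atTop, (1 - L ^ 2) / 2 ≤ (F h 1 (γ s)).2 := by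
      have hsq := (tendsto_const_nhds (x := (1 : ℝ))).sub (hlim.pow 2)
      filter_upwards [hsq.eventually_const_lt (show (1 - L ^ 2) / 2 < 1 - L ^ 2 by nlinarith)]
        with s hs
      linarith [one_sub_sq_le_F_snd hle (hmem s)]
    exact absurd hlim (not_tendsto_nhds_of_tendsto_atTop (tendsto_atTop_of_hasDerivAt_ge
      (by nlinarith) (fun s => horb.hasDerivAt_snd (mem_univ s)) hF) L)
  · exact hL ▸ hlim

theorem tendsto_fst_atTop (hle : ∀ y ∈ Icc (-1 : ℝ) 1, h y ≤ 0)
    (horb : IsOrbitOn h 1 γ univ) : Tendsto (fun s => (γ s).1) atTop atTop :=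
  tendsto_atTop_of_hasDerivAt_ge one_half_pos (fun s => horb.hasDerivAt_fst (mem_univ s))
    ((horb.tendsto_snd_atTop hle).eventually_const_le (by norm_num))

theorem tendsto_snd_atBot (hle : ∀ y ∈ Icc (-1 : ℝ) 1, h y ≤ 0)
    (horb : IsOrbitOn h 1 γ univ) : Tendsto (fun s => (γ s).2) atBot (𝓝 (-1)) := by
  have := (horb.reflect.tendsto_snd_atTop
    fun y hy => hle (-y) (neg_mem_Icc_neg_one_one hy)).comp tendsto_neg_atBot_atTop
  simpa [Function.comp_def, reflectOrbit] using this.neg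

theorem tendsto_fst_atBot (hle : ∀ y ∈ Icc (-1 : ℝ) 1, h y ≤ 0)
    (horb : IsOrbitOn h 1 γ univ) : Tendsto (fun s => (γ s).1) atBot atTop := by
  have := (horb.reflect.tendsto_fst_atTop
    fun y hy => hle (-y) (neg_mem_Icc_neg_one_one hy)).comp tendsto_neg_atBot_atTop
  simpa [Function.comp_def, reflectOrbit] using this

end IsOrbitOn

theorem stmt6_general (h : ℝ → ℝ) (hC : ContDiffOn ℝ 1 h (Set.Icc (-1 : ℝ) 1))
    (hle : ∀ y ∈ Set.Icc (-1 : ℝ) 1, h y ≤ 0) (hm1 : h (-1) = 0) (hp1 : h 1 = 0)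
    (x₀ : ℝ) (a b : EReal) (γ : ℝ → ℝ × ℝ)
    (horb : IsMaxOrbitOn h 1 γ (EIoo a b)) (hmem : (0 : ℝ) ∈ EIoo a b)
    (hinit : γ 0 = (x₀, 0)) :
    a = ⊥ ∧ b = ⊤ ∧
    StrictMono (fun s => (γ s).2) ∧
    (γ 0).1 = x₀ ∧ (∀ s : ℝ, s ≠ 0 → x₀ < (γ s).1) ∧
    Filter.Tendsto (fun s => (γ s).1) Filter.atTop Filter.atTop ∧
    Filter.Tendsto (fun s => (γ s).1) Filter.atBot Filter.atTop ∧
    Filter.Tendsto (fun s => (γ s).2) Filter.atTop (nhds (1 : ℝ)) ∧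
    Filter.Tendsto (fun s => (γ s).2) Filter.atBot (nhds (-1 : ℝ)) := by
  have hy₀ : (γ 0).2 = 0 := by simp [hinit]
  obtain rfl := horb.eq_top_of_snd_nonneg hC hle hp1 hmem hy₀.ge
  obtain rfl := horb.eq_bot_of_snd_nonpos hC hle hm1 hmem hy₀.le
  have hγ : IsOrbitOn h 1 γ univ := EIoo_bot_top ▸ horb.1
  have hy := strictMonoOn_univ.1 (hγ.strictMonoOn_snd hle)
  refine ⟨rfl, rfl, hy, by simp [hinit], fun s hs => ?_, hγ.tendsto_fst_atTop hle,
    hγ.tendsto_fst_atBot hle, hγ.tendsto_snd_atTop hle, hγ.tendsto_snd_atBot hle⟩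
  simpa [hinit] using
    lt_of_hasDerivAt_of_strictMono (fun s => hγ.hasDerivAt_fst (mem_univ s)) hy hy₀ hs

/-- h-catenoids: if `h ≤ 0` on `[-1,1]` and `h(±1) = 0`, the maximal orbit of
`F₁` through `(x₀,0)` is defined on all of `ℝ`, has strictly increasing `y`-coordinate,
`x` attains its strict global minimum `x₀` at `s = 0`, and `x(s) → ∞`, `y(s) → ±1` as
`s → ±∞`. -/
theorem stmt6 (h : ℝ → ℝ) (hC : ContDiffOn ℝ 1 h (Set.Icc (-1 : ℝ) 1))
    (hle : ∀ y ∈ Set.Icc (-1 : ℝ) 1, h y ≤ 0) (hm1 : h (-1) = 0) (hp1 : h 1 = 0)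
    (x₀ : ℝ) (hx₀ : 0 < x₀) (a b : EReal) (γ : ℝ → ℝ × ℝ)
    (horb : IsMaxOrbitOn h 1 γ (EIoo a b)) (hmem : (0 : ℝ) ∈ EIoo a b)
    (hinit : γ 0 = (x₀, 0)) :
    a = ⊥ ∧ b = ⊤ ∧
    StrictMono (fun s => (γ s).2) ∧
    (γ 0).1 = x₀ ∧ (∀ s : ℝ, s ≠ 0 → x₀ < (γ s).1) ∧
    Filter.Tendsto (fun s => (γ s).1) Filter.atTop Filter.atTop ∧
    Filter.Tendsto (fun s => (γ s).1) Filter.atBot Filter.atTop ∧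
    Filter.Tendsto (fun s => (γ s).2) Filter.atTop (nhds (1 : ℝ)) ∧
    Filter.Tendsto (fun s => (γ s).2) Filter.atBot (nhds (-1 : ℝ)) :=
  stmt6_general h hC hle hm1 hp1 x₀ a b γ horb hmem hinit
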